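/- Consider a StackMST(0,0) game whose red tree is a star centered at v0 with leaves u_1, …, u_t and nonnegative red costs c(v0, u_j). Let F be a set of blue edges (each joining two leaves of the red star) such that (V, F) is a forest of stars, with a designated center for each component having at least one edge (for a component with a single edge either endpoint may be designated as the center), and let L be the set of leaves of the stars of (V, F), i.e., the non-center vertices of positive degree. Then the revenue obtainable from F satisfies r(F) ≥ Σ_{v ∈ L} c(v0, v). -/

import Mathlib

/-!
Price each blue edge `u v` of `F`, with `u` a center and `v` a leaf of its star, at the red cost
`c(v0, v)`, so that it ties with the red edge `v0 v`. Take a minimum-weight spanning tree of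
`T ∪ F` missing as few edges of `F` as possible. If it missed some `u v`, then `v` (whose only
neighbours in `T ∪ F` are `v0` and `u`) would be a leaf of the tree hanging at `v0`, and trading
`v0 v` for `u v` would give another minimum-weight tree missing fewer edges of `F`. So some
minimum-weight tree contains all of `F`, and its blue revenue is `Σ_{v ∈ L} c(v0, v)`.
-/

namespace StackMST

variable {V : Type*}

/-- Sum of an edge-weight function over a set of edges. -/
noncomputable def esum (w : Sym2 V → ℝ) (s : Set (Sym2 V)) : ℝ := ∑ᶠ e ∈ s, w e

/-- `M` is a spanning tree of `G`. -/
def IsSpanningTreeOf (G M : SimpleGraph V) : Prop := M ≤ G ∧ M.IsTree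

/-- Total weight of `M`, where red edges (the edges of `T`) are weighted by `c`
and all other (blue) edges are weighted by `p`. -/
noncomputable def weight (T : SimpleGraph V) (c p : Sym2 V → ℝ) (M : SimpleGraph V) : ℝ :=
  esum c (M.edgeSet ∩ T.edgeSet) + esum p (M.edgeSet \ T.edgeSet)

/-- Total price of the blue edges of `M`. -/
noncomputable def blueRevenue (T : SimpleGraph V) (p : Sym2 V → ℝ) (M : SimpleGraph V) : ℝ :=
  esum p (M.edgeSet \ T.edgeSet)

/-- The leader's revenue once `F` and `p` are fixed: the follower selects a
minimum-weight spanning tree of `T ⊔ F` and, among those, one maximizing the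
total price of the blue edges it contains. -/
noncomputable def followerRevenue (T : SimpleGraph V) (c : Sym2 V → ℝ)
    (F : SimpleGraph V) (p : Sym2 V → ℝ) : ℝ :=
  sSup {r | ∃ M : SimpleGraph V, IsSpanningTreeOf (T ⊔ F) M ∧
    (∀ M' : SimpleGraph V, IsSpanningTreeOf (T ⊔ F) M' →
        weight T c p M ≤ weight T c p M') ∧
    r = blueRevenue T p M}

/-- `F` is a set of blue edges: none of its edges is a red edge. -/
def IsBlueSet (T F : SimpleGraph V) : Prop := F ≤ Tᶜ

/-- `r(F)`: the best revenue the leader can obtain from the activated set `F`. -/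
noncomputable def revenueOf (T : SimpleGraph V) (c : Sym2 V → ℝ) (F : SimpleGraph V) : ℝ :=
  sSup {r | ∃ p : Sym2 V → ℝ, (∀ e ∈ F.edgeSet, 0 ≤ p e) ∧ r = followerRevenue T c F p}

/-- Optimal revenue `r*(T, c)` of the StackMST(0,0) game on the red tree `T`. -/
noncomputable def optRevenue (T : SimpleGraph V) (c : Sym2 V → ℝ) : ℝ :=
  sSup {r | ∃ (F : SimpleGraph V) (p : Sym2 V → ℝ), IsBlueSet T F ∧
    (∀ e ∈ F.edgeSet, 0 ≤ p e) ∧ r = followerRevenue T c F p}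

/-- Total cost `c(T)` of the red edges. -/
noncomputable def redCost (T : SimpleGraph V) (c : Sym2 V → ℝ) : ℝ := esum c T.edgeSet

/-- Optimal revenue of the budgeted game StackMST(γ, Δ). -/
noncomputable def gammaOptRevenue (T : SimpleGraph V) (c γ : Sym2 V → ℝ) (Δ : ℝ) : ℝ :=
  sSup {r | ∃ F : SimpleGraph V, IsBlueSet T F ∧ esum γ F.edgeSet ≤ Δ ∧
    r = revenueOf T c F}

end StackMST

namespace StackMST

/-- The star graph on `V` centered at `v0`: `v0` is joined to every other vertex. -/
def starGraph {V : Type*} (v0 : V) : SimpleGraph V :=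
  SimpleGraph.fromRel (fun u _ => u = v0)

end StackMST

namespace SimpleGraph

variable {V : Type*} {G : SimpleGraph V}

lemma Walk.IsCycle.notMem_support_of_subsingleton_neighborSet {u x : V} {c : G.Walk u u}
    (hc : c.IsCycle) (hx : (G.neighborSet x).Subsingleton) : x ∉ c.support := by
  intro hxc
  have hsub : (c.toSubgraph.neighborSet x).Subsingleton :=
    hx.anti (c.toSubgraph.neighborSet_subset x)
  have := hsub.finite.to_subtype
  have := Set.ncard_le_one_iff_subsingleton.mpr hsub
  rw [hc.ncard_neighborSet_toSubgraph_eq_two hxc] at this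
  omega

lemma edgeSet_deleteEdges_sup_edge {u v : V} (huv : u ≠ v) (e : Sym2 V) :
    (G.deleteEdges {e} ⊔ edge u v).edgeSet = insert s(u, v) (G.edgeSet \ {e}) := by
  rw [edgeSet_sup, edgeSet_deleteEdges, edgeSet_edge_of_ne huv, Set.union_singleton]

theorem IsTree.deleteEdges_sup_edge (hG : G.IsTree) {u v w : V} (hvw : G.Adj v w)
    (hv : (G.neighborSet v).Subsingleton) (huv : u ≠ v) :
    (G.deleteEdges {s(v, w)} ⊔ edge u v).IsTree := by
  set G' := G.deleteEdges {s(v, w)} ⊔ edge u v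
  have hG'_adj : ∀ x y, G'.Adj x y ↔ (G.Adj x y ∧ s(x, y) ≠ s(v, w)) ∨
      ((x = u ∧ y = v ∨ x = v ∧ y = u) ∧ x ≠ y) := by
    simp [G', edge_adj]
  have hreach : ∀ x, x ≠ v → (G.deleteEdges {s(v, w)}).Reachable x w := by
    intro x hx
    obtain ⟨p, hp⟩ := hG.connected.preconnected.exists_isPath x w
    have hvp := hp.isTrail.not_mem_support_of_subsingleton_neighborSet hx.symm hvw.ne hv
    exact ⟨p.toDeleteEdges _ fun e he hew => hvp <|
      p.fst_mem_support_of_mem_edges (Set.mem_singleton_iff.mp hew ▸ he)⟩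
  have hreach' : ∀ x, G'.Reachable x w := by
    intro x
    by_cases hx : x = v
    · subst hx
      have hxu : G'.Adj x u := (hG'_adj x u).mpr (Or.inr ⟨Or.inr ⟨rfl, rfl⟩, huv.symm⟩)
      exact hxu.reachable.trans ((hreach u huv).mono le_sup_left)
    · exact (hreach x hx).mono le_sup_left
  have : Nonempty V := ⟨v⟩
  refine ⟨.mk fun x y => (hreach' x).trans (hreach' y).symm, fun x c hc => ?_⟩
  by_cases hvc : v ∈ c.support
  · have hv' : G'.neighborSet v ⊆ {u} := by
      intro y hy
      rcases (hG'_adj v y).mp hy with ⟨hy, hyw⟩ | ⟨hyu, -⟩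
      · exact absurd (by rw [hv hy hvw]) hyw
      · grind
    exact hc.notMem_support_of_subsingleton_neighborSet (Set.subsingleton_singleton.anti hv') hvc
  · have hedges : ∀ e ∈ c.edges, e ∈ G.edgeSet := by
      intro e he
      have heG' := c.edges_subset_edgeSet he
      rw [edgeSet_deleteEdges_sup_edge huv] at heG'
      rcases heG' with heuv | ⟨heG, -⟩
      · exact absurd (c.snd_mem_support_of_mem_edges (heuv ▸ he)) hvc
      · exact heG
    exact hG.isAcyclic (c.transfer G hedges) (hc.transfer hedges)

end SimpleGraph

namespace StackMST

open SimpleGraph (edge)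

variable {V : Type*}

section Esum

variable {w : Sym2 V → ℝ} {s : Set (Sym2 V)} {a : Sym2 V}

lemma esum_nonneg (h : ∀ e ∈ s, 0 ≤ w e) : 0 ≤ esum w s :=
  finsum_nonneg fun e => finsum_nonneg (h e)

lemma esum_empty (w : Sym2 V → ℝ) : esum w ∅ = 0 := finsum_mem_empty

variable [Finite V]

lemma esum_insert (ha : a ∉ s) : esum w (insert a s) = w a + esum w s :=
  finsum_mem_insert w ha (Set.toFinite s)

lemma esum_diff_singleton_add (ha : a ∈ s) : esum w (s \ {a}) + w a = esum w s := by
  rw [add_comm, ← esum_insert (fun h => h.2 rfl), Set.insert_sdiff_singleton,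
    Set.insert_eq_of_mem ha]

end Esum

section Weight

variable {T F M : SimpleGraph V} {c p : Sym2 V → ℝ}

lemma weight_self : weight T c p T = redCost T c := by
  rw [weight, Set.inter_self, Set.sdiff_self, esum_empty, add_zero, redCost]

lemma blueRevenue_le_weight (hc : ∀ e ∈ T.edgeSet, 0 ≤ c e) :
    blueRevenue T p M ≤ weight T c p M :=
  le_add_of_nonneg_left (esum_nonneg fun e he => hc e he.2)

lemma blueRevenue_eq_esum (hF : IsBlueSet T F) (hFM : F ≤ M) (hMT : M ≤ T ⊔ F) :
    blueRevenue T p M = esum p F.edgeSet := by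
  rw [blueRevenue]
  congr 1
  refine Set.Subset.antisymm (fun e ⟨heM, heT⟩ => ?_)
    (fun e he => ⟨SimpleGraph.edgeSet_mono hFM he, ?_⟩)
  · have he := SimpleGraph.edgeSet_mono hMT heM
    rw [SimpleGraph.edgeSet_sup] at he
    exact he.resolve_left heT
  · exact Set.disjoint_left.mp
      (SimpleGraph.disjoint_edgeSet.mpr (le_compl_iff_disjoint_right.mp hF)) he

lemma weight_deleteEdges_sup_edge [Finite V] {u v w : V} (huv : u ≠ v)
    (hvw : s(v, w) ∈ M.edgeSet ∩ T.edgeSet) (huvM : s(u, v) ∉ M.edgeSet)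
    (huvT : s(u, v) ∉ T.edgeSet) :
    weight T c p (M.deleteEdges {s(v, w)} ⊔ edge u v) + c s(v, w) =
      weight T c p M + p s(u, v) := by
  have hred : insert s(u, v) (M.edgeSet \ {s(v, w)}) ∩ T.edgeSet =
      (M.edgeSet ∩ T.edgeSet) \ {s(v, w)} := by
    ext e
    simp only [Set.mem_inter_iff, Set.mem_insert_iff, Set.mem_sdiff, Set.mem_singleton_iff]
    grind
  have hblue : insert s(u, v) (M.edgeSet \ {s(v, w)}) \ T.edgeSet =
      insert s(u, v) (M.edgeSet \ T.edgeSet) := by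
    ext e
    simp only [Set.mem_insert_iff, Set.mem_sdiff, Set.mem_singleton_iff]
    grind
  rw [weight, weight, M.edgeSet_deleteEdges_sup_edge huv, hred, hblue,
    esum_insert fun h => huvM h.1, ← esum_diff_singleton_add hvw]
  ring

end Weight

section MinWeightTree

variable {T F M : SimpleGraph V} {c p : Sym2 V → ℝ}

def IsMinWeightTree (T F : SimpleGraph V) (c p : Sym2 V → ℝ) (M : SimpleGraph V) : Prop :=
  IsSpanningTreeOf (T ⊔ F) M ∧
    ∀ M', IsSpanningTreeOf (T ⊔ F) M' → weight T c p M ≤ weight T c p M'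

lemma exists_isMinWeightTree [Finite V] (hT : T.IsTree) : ∃ M, IsMinWeightTree T F c p M := by
  obtain ⟨M, hM, hmin⟩ := Set.exists_min_image {M | IsSpanningTreeOf (T ⊔ F) M}
    (weight T c p) (Set.toFinite _) ⟨T, le_sup_left, hT⟩
  exact ⟨M, hM, hmin⟩

lemma IsMinWeightTree.deleteEdges_sup_edge [Finite V] (hM : IsMinWeightTree T F c p M)
    {u v w : V} (hvw : M.Adj v w) (hvwT : T.Adj v w) (hv : (M.neighborSet v).Subsingleton)
    (huv : F.Adj u v) (huvT : ¬T.Adj u v) (hp : p s(u, v) = c s(v, w)) :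
    IsMinWeightTree T F c p (M.deleteEdges {s(v, w)} ⊔ edge u v) := by
  have huvM : ¬M.Adj u v := fun h => huvT (hv h.symm hvw ▸ hvwT.symm)
  have hweight := weight_deleteEdges_sup_edge (c := c) (p := p) huv.ne ⟨hvw, hvwT⟩ huvM huvT
  refine ⟨⟨sup_le ((M.deleteEdges_le _).trans hM.1.1)
      (((SimpleGraph.edge_le_iff (G := F)).mpr (Or.inr huv)).trans le_sup_right),
    hM.1.2.deleteEdges_sup_edge hvw hv huv.ne⟩, fun M' hM' => ?_⟩
  linarith [hM.2 M' hM']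

lemma IsMinWeightTree.blueRevenue_le_followerRevenue [Finite V]
    (hM : IsMinWeightTree T F c p M) : blueRevenue T p M ≤ followerRevenue T c F p := by
  refine le_csSup ((Set.finite_range (blueRevenue T p)).subset ?_).bddAbove ⟨M, hM.1, hM.2, rfl⟩
  rintro r ⟨M', -, -, rfl⟩
  exact ⟨M', rfl⟩

lemma followerRevenue_le_redCost (hT : T.IsTree) (hc : ∀ e ∈ T.edgeSet, 0 ≤ c e) :
    followerRevenue T c F p ≤ redCost T c := by
  refine Real.sSup_le ?_ (esum_nonneg hc)
  rintro r ⟨M, -, hmin, rfl⟩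
  calc blueRevenue T p M ≤ weight T c p M := blueRevenue_le_weight hc
    _ ≤ weight T c p T := hmin T ⟨le_sup_left, hT⟩
    _ = redCost T c := weight_self

lemma followerRevenue_le_revenueOf (hT : T.IsTree) (hc : ∀ e ∈ T.edgeSet, 0 ≤ c e)
    (hp : ∀ e ∈ F.edgeSet, 0 ≤ p e) : followerRevenue T c F p ≤ revenueOf T c F := by
  refine le_csSup ⟨redCost T c, ?_⟩ ⟨p, hp, rfl⟩
  rintro r ⟨p', -, rfl⟩
  exact followerRevenue_le_redCost hT hc

end MinWeightTree

section StarForest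

variable {v0 : V} {c : Sym2 V → ℝ} {F M : SimpleGraph V} {C : Set V}

def IsStarForest (F : SimpleGraph V) (C : Set V) : Prop :=
  (∀ u v, F.Adj u v → (u ∈ C ↔ v ∉ C)) ∧ ∀ v ∉ C, (F.neighborSet v).Subsingleton

open Classical in
noncomputable def leafPrice (v0 : V) (C : Set V) (c : Sym2 V → ℝ) : Sym2 V → ℝ :=
  Sym2.lift ⟨fun a b => (if a ∈ C then c s(v0, b) else 0) + (if b ∈ C then c s(v0, a) else 0),
    fun _ _ => add_comm _ _⟩

lemma leafPrice_mk {a b : V} (ha : a ∈ C) (hb : b ∉ C) :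
    leafPrice v0 C c s(a, b) = c s(v0, b) := by
  simp [leafPrice, ha, hb]

lemma IsStarForest.exists_eq_mk (hF : IsStarForest F C) {e : Sym2 V} (he : e ∈ F.edgeSet) :
    ∃ u v, e = s(u, v) ∧ F.Adj u v ∧ u ∈ C ∧ v ∉ C := by
  induction e using Sym2.ind with
  | h a b =>
    by_cases ha : a ∈ C
    · exact ⟨a, b, rfl, he, ha, (hF.1 a b he).mp ha⟩
    · exact ⟨b, a, Sym2.eq_swap, he.symm, not_not.mp (mt (hF.1 a b he).mpr ha), ha⟩

lemma isBlueSet_starGraph (hFv0 : ∀ u v, F.Adj u v → u ≠ v0 ∧ v ≠ v0) :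
    IsBlueSet (SimpleGraph.starGraph v0) F := by
  intro a b h
  rw [SimpleGraph.compl_adj, SimpleGraph.starGraph_adj]
  have hab := hFv0 a b h
  exact ⟨h.ne, fun ⟨_, h'⟩ => h'.elim hab.1 hab.2⟩

lemma IsStarForest.leafPrice_nonneg (hF : IsStarForest F C)
    (hFv0 : ∀ u v, F.Adj u v → u ≠ v0 ∧ v ≠ v0)
    (hc : ∀ e ∈ (SimpleGraph.starGraph v0).edgeSet, 0 ≤ c e) :
    ∀ e ∈ F.edgeSet, 0 ≤ leafPrice v0 C c e := by
  intro e he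
  obtain ⟨u, v, rfl, huv, hu, hv⟩ := hF.exists_eq_mk he
  rw [leafPrice_mk hu hv]
  exact hc _ (SimpleGraph.starGraph_center_adj (hFv0 u v huv).2.symm)

lemma IsStarForest.neighborSet_subset_singleton (hF : IsStarForest F C)
    (hFv0 : ∀ u v, F.Adj u v → u ≠ v0 ∧ v ≠ v0)
    (hM : M ≤ SimpleGraph.starGraph v0 ⊔ F) {u v : V} (huv : F.Adj u v) (hv : v ∉ C)
    (huvM : ¬M.Adj u v) : M.neighborSet v ⊆ {v0} := by
  intro w hw
  rcases hM hw with h | h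
  · exact (SimpleGraph.starGraph_adj.mp h).2.resolve_left (hFv0 u v huv).2
  · obtain rfl : w = u := hF.2 v hv h huv.symm
    exact absurd hw.symm huvM

lemma IsStarForest.exists_le_isMinWeightTree [Finite V] (hF : IsStarForest F C)
    (hFv0 : ∀ u v, F.Adj u v → u ≠ v0 ∧ v ≠ v0) :
    ∃ M, IsMinWeightTree (SimpleGraph.starGraph v0) F c (leafPrice v0 C c) M ∧ F ≤ M := by
  obtain ⟨M, hM, hmin⟩ := Set.exists_min_image
    {M | IsMinWeightTree (SimpleGraph.starGraph v0) F c (leafPrice v0 C c) M}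
    (fun M => (F.edgeSet \ M.edgeSet).ncard) (Set.toFinite _)
    (exists_isMinWeightTree (SimpleGraph.isTree_starGraph v0))
  refine ⟨M, hM, SimpleGraph.edgeSet_subset_edgeSet.mp fun e he => ?_⟩
  by_contra heM
  obtain ⟨u, v, rfl, huv, hu, hv⟩ := hF.exists_eq_mk he
  have hv0 := (hFv0 u v huv).2
  have hnbr := hF.neighborSet_subset_singleton hFv0 hM.1.1 huv hv heM
  have hvv0 : M.Adj v v0 := by
    obtain ⟨p⟩ := hM.1.2.connected.preconnected v u
    have hsnd := p.adj_snd (SimpleGraph.Walk.not_nil_of_ne huv.ne.symm)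
    rwa [Set.mem_singleton_iff.mp (hnbr hsnd)] at hsnd
  have hM' := hM.deleteEdges_sup_edge hvv0 (SimpleGraph.starGraph_center_adj' hv0.symm)
    (Set.subsingleton_singleton.anti hnbr) huv
    (fun h => by have := hFv0 u v huv; grind [SimpleGraph.starGraph_adj])
    (by rw [leafPrice_mk hu hv, Sym2.eq_swap])
  refine (hmin _ hM').not_gt (Set.ncard_lt_ncard ?_)
  have hsub : F.edgeSet \ (M.deleteEdges {s(v, v0)} ⊔ edge u v).edgeSet ⊆
      F.edgeSet \ M.edgeSet := by
    rintro e ⟨heF, heM'⟩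
    refine ⟨heF, fun heM => heM' ?_⟩
    rw [M.edgeSet_deleteEdges_sup_edge huv.ne]
    refine Or.inr ⟨heM, fun h => ?_⟩
    rw [Set.mem_singleton_iff] at h
    subst h
    exact (hFv0 v v0 heF).2 rfl
  refine (Set.ssubset_iff_of_subset hsub).mpr ⟨s(u, v), ⟨he, heM⟩, fun h => h.2 ?_⟩
  rw [M.edgeSet_deleteEdges_sup_edge huv.ne]
  exact Set.mem_insert _ _

lemma IsStarForest.finsum_leaves_eq_esum_leafPrice (hF : IsStarForest F C) :
    ∑ᶠ v ∈ {v : V | v ∉ C ∧ ∃ u, F.Adj u v}, c s(v0, v) =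
      esum (leafPrice v0 C c) F.edgeSet := by
  choose! partner hpartner using fun v (hv : v ∈ {v : V | v ∉ C ∧ ∃ u, F.Adj u v}) => hv.2
  have hcenter : ∀ v ∈ {v : V | v ∉ C ∧ ∃ u, F.Adj u v}, partner v ∈ C := fun v hv =>
    (hF.1 _ _ (hpartner v hv)).mpr hv.1
  refine finsum_mem_eq_of_bijOn (fun v => s(partner v, v)) ⟨fun v hv => hpartner v hv, ?_, ?_⟩
    fun v hv => (leafPrice_mk (hcenter v hv) hv.1).symm
  · intro x hx y hy hxy
    rcases Sym2.eq_iff.mp hxy with ⟨-, h⟩ | ⟨h, -⟩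
    · exact h
    · exact absurd (h ▸ hcenter x hx) hy.1
  · intro e he
    obtain ⟨u, v, rfl, huv, -, hv⟩ := hF.exists_eq_mk he
    refine ⟨v, ⟨hv, u, huv⟩, ?_⟩
    change s(partner v, v) = s(u, v)
    rw [hF.2 v hv (hpartner v ⟨hv, u, huv⟩).symm huv.symm]

end StarForest

end StackMST

open StackMST

/-- Consider a StackMST(0,0) game whose red tree is a star
centered at `v0` (so its leaves are all other vertices) with nonnegative costs.
Let `F` be a set of blue edges joining leaves of the red star such that `(V, F)`
is a forest of stars, with designated set of centers `C` (every edge of `F` joins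
a center to a non-center, and every non-center vertex is incident to at most one
edge of `F`). Let `L` be the set of leaves of the stars of `(V, F)`, i.e. the
non-center vertices of positive degree. Then `r(F) ≥ Σ_{v ∈ L} c(v0, v)`. -/
theorem stackMST_star_forest_revenue {V : Type*} [Finite V] (v0 : V)
    (c : Sym2 V → ℝ) (hc : ∀ e ∈ (starGraph v0).edgeSet, 0 ≤ c e)
    (F : SimpleGraph V) (hFleaf : ∀ u v : V, F.Adj u v → u ≠ v0 ∧ v ≠ v0)
    (C : Set V)
    (hcen : ∀ u v : V, F.Adj u v → (u ∈ C ↔ v ∉ C))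
    (hdeg : ∀ v : V, v ∉ C → (F.neighborSet v).Subsingleton) :
    ∑ᶠ v ∈ {v : V | v ∉ C ∧ ∃ u, F.Adj u v}, c s(v0, v) ≤
      revenueOf (starGraph v0) c F := by
  have hF : IsStarForest F C := ⟨hcen, hdeg⟩
  rw [show starGraph v0 = SimpleGraph.starGraph v0 from rfl] at hc ⊢
  obtain ⟨M, hM, hFM⟩ := hF.exists_le_isMinWeightTree (c := c) hFleaf
  calc ∑ᶠ v ∈ {v : V | v ∉ C ∧ ∃ u, F.Adj u v}, c s(v0, v)
      = esum (leafPrice v0 C c) F.edgeSet := hF.finsum_leaves_eq_esum_leafPrice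
    _ = blueRevenue (SimpleGraph.starGraph v0) (leafPrice v0 C c) M :=
      (blueRevenue_eq_esum (isBlueSet_starGraph hFleaf) hFM hM.1.1).symm
    _ ≤ followerRevenue (SimpleGraph.starGraph v0) c F (leafPrice v0 C c) :=
      hM.blueRevenue_le_followerRevenue
    _ ≤ revenueOf (SimpleGraph.starGraph v0) c F :=
      followerRevenue_le_revenueOf (SimpleGraph.isTree_starGraph v0) hc
        (hF.leafPrice_nonneg hFleaf hc)
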